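/- Let H be an r-uniform hypergraph, let C' = v_1, e_1, v_2, …, v_c, e_c, v_1 be a Berge cycle of maximum length in H, let u ∈ V(H) − V(C'), and let W be a (u,C')-expanding set. Then u is contained in at most one edge of {e_j : v_j ∈ W} and in at most one edge of {e_{j−1} : v_j ∈ W} (indices modulo c). Moreover, suppose v_j ∈ W and u ∈ e_j; then for every v_i ∈ W − {v_j} and every Berge path R(v_i, v_j) witnessing the expanding property, if an edge e ∈ E(H) − E(C') − E(R(v_i, v_j)) contains u, then v_{i+1} ∉ e; similarly, if u ∈ e_{j−1}, then v_{i−1} ∉ e. -/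

import Mathlib

/-- A hypergraph on vertex type `α`: a finite vertex set together with a family of
distinct subsets of it, called edges. -/
structure Hypergraph' (α : Type*) [DecidableEq α] where
  verts : Finset α
  edges : Finset (Finset α)
  edge_sub : ∀ e ∈ edges, e ⊆ verts

/-- A simple graph is 2-connected if it has at least 3 vertices, is connected, and
remains connected after deleting any single vertex. -/
def IsTwoConnectedGraph {V : Type*} (G : SimpleGraph V) : Prop :=
  3 ≤ Nat.card V ∧ G.Connected ∧
    ∀ x : V, ((⊤ : G.Subgraph).deleteVerts {x}).coe.Connected

namespace Hypergraph'

variable {α : Type*} [DecidableEq α]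

/-- `H` is `r`-uniform: each edge has exactly `r` vertices. -/
def Uniform (H : Hypergraph' α) (r : ℕ) : Prop := ∀ e ∈ H.edges, e.card = r

/-- The degree of a vertex: the number of edges containing it. -/
def degree (H : Hypergraph' α) (v : α) : ℕ := (H.edges.filter (fun e => v ∈ e)).card

/-- The minimum degree of `H` is at least `k`. -/
def MinDegreeGE (H : Hypergraph' α) (k : ℕ) : Prop := ∀ v ∈ H.verts, k ≤ H.degree v

/-- The vertex type of the incidence graph of `H`: vertices of `H` together with
edges of `H`. -/
def IncVert (H : Hypergraph' α) : Type _ :=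
  {x : α ⊕ Finset α // Sum.elim (fun v => v ∈ H.verts) (fun e => e ∈ H.edges) x}

/-- The incidence (bipartite) graph of `H`: `v ∈ V(H)` is adjacent to `e ∈ E(H)`
iff `v ∈ e`. -/
def incidenceGraph (H : Hypergraph' α) : SimpleGraph (IncVert H) where
  Adj x y := (∃ v e, x.1 = Sum.inl v ∧ y.1 = Sum.inr e ∧ v ∈ e) ∨
             (∃ v e, y.1 = Sum.inl v ∧ x.1 = Sum.inr e ∧ v ∈ e)
  symm := ⟨fun _ _ h => h.elim Or.inr Or.inl⟩
  loopless := by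
    constructor
    rintro x (⟨v, e, h1, h2, _⟩ | ⟨v, e, h1, h2, _⟩) <;> rw [h1] at h2 <;> simp at h2

/-- `H` is 2-connected iff its incidence graph is a 2-connected graph. -/
def TwoConnected (H : Hypergraph' α) : Prop := IsTwoConnectedGraph H.incidenceGraph

/-- `H` contains a Berge cycle of length `c`: `c` distinct vertices `v_1, …, v_c` and
`c` distinct edges `e_1, …, e_c` with `{v_i, v_{i+1}} ⊆ e_i` (indices mod `c`). -/
def HasBergeCycle (H : Hypergraph' α) (c : ℕ) : Prop :=
  2 ≤ c ∧ ∃ (v : ZMod c → α) (e : ZMod c → Finset α),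
    Function.Injective v ∧ Function.Injective e ∧
    (∀ i, e i ∈ H.edges) ∧ (∀ i, v i ∈ e i) ∧ (∀ i, v (i + 1) ∈ e i)

end Hypergraph'

open Hypergraph'

variable {α : Type*} [DecidableEq α]

/-- A Berge cycle of length `c` in `H`, with defining vertices `v i` and edges `e i`
indexed cyclically by `ZMod c`; edge `e i` contains `v i` and `v (i+1)`. -/
structure BergeCycle (H : Hypergraph' α) (c : ℕ) where
  hc : 2 ≤ c
  v : ZMod c → α
  e : ZMod c → Finset α
  v_inj : Function.Injective v
  e_inj : Function.Injective e
  e_mem : ∀ i, e i ∈ H.edges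
  mem_self : ∀ i, v i ∈ e i
  mem_succ : ∀ i, v (i + 1) ∈ e i

/-- The set of defining vertices of a Berge cycle. -/
def BergeCycle.vset {H : Hypergraph' α} {c : ℕ} (C : BergeCycle H c) : Finset α :=
  letI : NeZero c := ⟨by have h := C.hc; omega⟩
  Finset.image C.v Finset.univ

/-- The set of edges of a Berge cycle. -/
def BergeCycle.eset {H : Hypergraph' α} {c : ℕ} (C : BergeCycle H c) : Finset (Finset α) :=
  letI : NeZero c := ⟨by have h := C.hc; omega⟩
  Finset.image C.e Finset.univ

/-- A Berge path `u 0, f 0, u 1, …, f (ℓ-1), u ℓ` in `H` with `ℓ` edges: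
distinct vertices, distinct edges, and `{u i, u (i+1)} ⊆ f i`. -/
structure BergePath (H : Hypergraph' α) (ℓ : ℕ) where
  u : Fin (ℓ + 1) → α
  f : Fin ℓ → Finset α
  u_inj : Function.Injective u
  f_inj : Function.Injective f
  u_mem : ∀ i, u i ∈ H.verts
  f_mem : ∀ i, f i ∈ H.edges
  mem_cast : ∀ i : Fin ℓ, u i.castSucc ∈ f i
  mem_succ : ∀ i : Fin ℓ, u i.succ ∈ f i

def BergePath.vset {H : Hypergraph' α} {ℓ : ℕ} (P : BergePath H ℓ) : Finset α :=
  Finset.image P.u Finset.univ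

def BergePath.eset {H : Hypergraph' α} {ℓ : ℕ} (P : BergePath H ℓ) : Finset (Finset α) :=
  Finset.image P.f Finset.univ

/-- A partial Berge path `f_0, u_1, f_1, …, f_(ℓ-1), u_ℓ`, beginning with an edge:
here `u i` denotes the vertex `u_(i+1)` and `f i` denotes the edge `f_i`, so that
`u_1 ∈ f_0` and `{u_i, u_(i+1)} ⊆ f_i` for `1 ≤ i ≤ ℓ-1`. -/
structure PartialBergePath (H : Hypergraph' α) (ℓ : ℕ) where
  u : Fin ℓ → α
  f : Fin ℓ → Finset α
  u_inj : Function.Injective u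
  f_inj : Function.Injective f
  u_mem : ∀ i, u i ∈ H.verts
  f_mem : ∀ i, f i ∈ H.edges
  mem_self : ∀ i : Fin ℓ, u i ∈ f i
  mem_next : ∀ (i : ℕ) (h : i + 1 < ℓ), u ⟨i, by omega⟩ ∈ f ⟨i + 1, h⟩

def PartialBergePath.vset {H : Hypergraph' α} {ℓ : ℕ} (P : PartialBergePath H ℓ) : Finset α :=
  Finset.image P.u Finset.univ

def PartialBergePath.eset {H : Hypergraph' α} {ℓ : ℕ} (P : PartialBergePath H ℓ) :
    Finset (Finset α) :=
  Finset.image P.f Finset.univ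

/-- An ordinary lollipop (o-lollipop): a Berge cycle `C` together with a Berge path `P`
starting at a vertex of `C`, with `|V(C) ∩ V(P)| = 1` and `E(C) ∩ E(P) = ∅`. -/
structure OLollipop (H : Hypergraph' α) (c ℓ : ℕ) where
  C : BergeCycle H c
  P : BergePath H ℓ
  start_mem : P.u 0 ∈ C.vset
  inter_v : C.vset ∩ P.vset = {P.u 0}
  inter_e : C.eset ∩ P.eset = ∅

/-- A partial lollipop (p-lollipop): a Berge cycle `C` together with a partial Berge
path `P` whose first edge is an edge of `C`, with `V(C) ∩ V(P) = ∅` and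
`E(C) ∩ E(P) = {f_0}`. -/
structure PLollipop (H : Hypergraph' α) (c ℓ : ℕ) where
  hl : 1 ≤ ℓ
  C : BergeCycle H c
  P : PartialBergePath H ℓ
  first_edge : P.f ⟨0, hl⟩ ∈ C.eset
  inter_v : C.vset ∩ P.vset = ∅
  inter_e : C.eset ∩ P.eset = {P.f ⟨0, hl⟩}

/-- A lollipop of `H` is either an o-lollipop or a p-lollipop. -/
inductive Lollipop (H : Hypergraph' α) : Type _ where
  | o : (c ℓ : ℕ) → OLollipop H c ℓ → Lollipop H
  | p : (c ℓ : ℕ) → PLollipop H c ℓ → Lollipop H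

namespace Lollipop

variable {H : Hypergraph' α}

/-- The set of defining vertices of the cycle of a lollipop. -/
def cycVset : Lollipop H → Finset α
  | .o _ _ L => L.C.vset
  | .p _ _ L => L.C.vset

/-- The set of edges of the cycle of a lollipop. -/
def cycEset : Lollipop H → Finset (Finset α)
  | .o _ _ L => L.C.eset
  | .p _ _ L => L.C.eset

/-- The set of vertices of the path of a lollipop. -/
def pathVset : Lollipop H → Finset α
  | .o _ _ L => L.P.vset
  | .p _ _ L => L.P.vset

/-- The set of edges of the path of a lollipop. -/
def pathEset : Lollipop H → Finset (Finset α)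
  | .o _ _ L => L.P.eset
  | .p _ _ L => L.P.eset

/-- `|V(P) − V(C)|`. -/
def pGain (L : Lollipop H) : ℕ := (L.pathVset \ L.cycVset).card

/-- The number of incidences between vertices of `V(P) − V(C)` and edges of
`E(C) − E(P)`, counted with multiplicity. -/
def incCount (L : Lollipop H) : ℕ :=
  ∑ e ∈ (L.cycEset \ L.pathEset), (e ∩ (L.pathVset \ L.cycVset)).card

/-- The number of edges of `E(P) − E(C)` entirely contained in `V(P) − V(C)`. -/
def contCount (L : Lollipop H) : ℕ :=
  ((L.pathEset \ L.cycEset).filter (fun e => e ⊆ L.pathVset \ L.cycVset)).card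

/-- 1-good: the cycle is as long as possible among all lollipops. -/
def Good1 (L : Lollipop H) : Prop := ∀ L' : Lollipop H, L'.cycVset.card ≤ L.cycVset.card

/-- 2-good: lexicographically maximizes `(|V(C)|, |V(P)−V(C)|)`. -/
def Good2 (L : Lollipop H) : Prop :=
  L.Good1 ∧ ∀ L' : Lollipop H, L'.cycVset.card = L.cycVset.card → L'.pGain ≤ L.pGain

/-- 3-good. -/
def Good3 (L : Lollipop H) : Prop :=
  L.Good2 ∧ ∀ L' : Lollipop H, L'.cycVset.card = L.cycVset.card → L'.pGain = L.pGain →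
    L'.incCount ≤ L.incCount

/-- 4-good (best). -/
def Good4 (L : Lollipop H) : Prop :=
  L.Good3 ∧ ∀ L' : Lollipop H, L'.cycVset.card = L.cycVset.card → L'.pGain = L.pGain →
    L'.incCount = L.incCount → L'.contCount ≤ L.contCount

end Lollipop

/-- A disjoint cycle-path pair (dcp-pair): a Berge cycle and a Berge path having no
common edges and such that no defining vertex of the cycle is a vertex of the path. -/
structure DcpPair (H : Hypergraph' α) where
  c : ℕ
  l : ℕ
  C : BergeCycle H c
  P : BergePath H l
  disj_v : Disjoint C.vset P.vset
  disj_e : Disjoint C.eset P.eset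

namespace DcpPair

variable {H : Hypergraph' α}

/-- The number of incidences between vertices of `V(P)` and edges of `E(C)`,
counted with multiplicity. -/
def incCount (D : DcpPair H) : ℕ := ∑ e ∈ D.C.eset, (e ∩ D.P.vset).card

/-- The number of edges of `E(P)` entirely contained in `V(P)`. -/
def contCount (D : DcpPair H) : ℕ := (D.P.eset.filter (fun e => e ⊆ D.P.vset)).card

/-- 1-good dcp-pair. -/
def Good1 (D : DcpPair H) : Prop := ∀ D' : DcpPair H, D'.C.vset.card ≤ D.C.vset.card

/-- 2-good dcp-pair: lexicographically maximizes `(|V(C)|, |V(P)|)`. -/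
def Good2 (D : DcpPair H) : Prop :=
  D.Good1 ∧ ∀ D' : DcpPair H, D'.C.vset.card = D.C.vset.card →
    D'.P.vset.card ≤ D.P.vset.card

/-- 3-good dcp-pair. -/
def Good3 (D : DcpPair H) : Prop :=
  D.Good2 ∧ ∀ D' : DcpPair H, D'.C.vset.card = D.C.vset.card →
    D'.P.vset.card = D.P.vset.card → D'.incCount ≤ D.incCount

/-- 4-good dcp-pair. -/
def Good4 (D : DcpPair H) : Prop :=
  D.Good3 ∧ ∀ D' : DcpPair H, D'.C.vset.card = D.C.vset.card →
    D'.P.vset.card = D.P.vset.card → D'.incCount = D.incCount →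
    D'.contCount ≤ D.contCount

end DcpPair

/-- The `E'`-neighborhood of a vertex `x`: all vertices `w` such that some edge of `E'`
contains both `x` and `w`. -/
def nbhd (E' : Finset (Finset α)) (x : α) : Finset α :=
  (E'.filter (fun e => x ∈ e)).biUnion id

/-- `W ⊆ V(C)` is `(u,C)`-expanding: for every two distinct vertices `x, y ∈ W` there is
a Berge path `R` from `x` to `y` whose internal vertices avoid `V(C) ∪ {u}` and all of
whose edges lie in `E(H) − E(C)`. -/
def IsExpanding {α : Type*} [DecidableEq α] {H : Hypergraph' α} {c : ℕ}
    (C : BergeCycle H c) (u : α) (W : Finset α) : Prop :=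
  W ⊆ C.vset ∧ ∀ x ∈ W, ∀ y ∈ W, x ≠ y →
    ∃ (ℓ : ℕ) (R : BergePath H ℓ),
      R.u 0 = x ∧ R.u (Fin.last ℓ) = y ∧
      (∀ t : Fin (ℓ + 1), t ≠ 0 → t ≠ Fin.last ℓ → R.u t ∉ C.vset ∧ R.u t ≠ u) ∧
      (∀ t : Fin ℓ, R.f t ∉ C.eset)

/-!
If `u` lay in two of the edges in question, say `g₁ ∋ v_{a+1}` and `g₂ ∋ v_{b+1}` with
`v_a, v_b ∈ W`, then a path `R` from `v_a` to `v_b` outside `C` would give the Berge cycle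
`u, g₁, v_{a+1}, …, v_b, R backwards, v_a, v_{a-1}, …, v_{b+1}, g₂, u` of length
`c + |E(R)| > c`. The same cycle arises when `g₁` is an edge outside `C` and `R`, which rules
out `v_{i+1} ∈ e`. The statements about `e_{j-1}` and `v_{i-1}` are those for the reversed
cycle.

The cycle is built from the path `v_{b+1}, …, v_b` of `C - e_b` by a Pósa rotation along `R`,
which removes `e_a`, and is then closed through `u`.
-/

open Set

section seqAppend

variable {β : Type*}

def seqAppend (f g : ℕ → β) (n : ℕ) (k : ℕ) : β := if k < n then f k else g (k - n)

variable {f g : ℕ → β} {n : ℕ}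

lemma seqAppend_of_lt {k : ℕ} (h : k < n) : seqAppend f g n k = f k := if_pos h

lemma seqAppend_of_le {k : ℕ} (h : n ≤ k) : seqAppend f g n k = g (k - n) := if_neg (by omega)

lemma seqAppend_add (m : ℕ) : seqAppend f g n (n + m) = g m := by
  rw [seqAppend_of_le (by omega), Nat.add_sub_cancel_left]

lemma image_seqAppend {S T : Set ℕ} (h : S = Iio n ∪ (n + ·) '' T) :
    seqAppend f g n '' S = f '' Iio n ∪ g '' T := by
  rw [h, image_union, image_image]
  congr 1
  · exact image_congr fun k hk => seqAppend_of_lt hk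
  · exact image_congr fun k _ => seqAppend_add k

lemma image_seqAppend_Iio (m : ℕ) :
    seqAppend f g n '' Iio (n + m) = f '' Iio n ∪ g '' Iio m := by
  refine image_seqAppend (ext fun k => ?_)
  simp only [mem_Iio, mem_union, mem_image]
  refine ⟨fun hk => ?_, by rintro (hk | ⟨j, hj, rfl⟩) <;> omega⟩
  exact (lt_or_ge k n).imp id fun hk => ⟨k - n, by omega, by omega⟩

lemma image_seqAppend_Iic (m : ℕ) :
    seqAppend f g n '' Iic (n + m) = f '' Iio n ∪ g '' Iic m := by
  refine image_seqAppend (ext fun k => ?_)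
  simp only [mem_Iio, mem_Iic, mem_union, mem_image]
  refine ⟨fun hk => ?_, by rintro (hk | ⟨j, hj, rfl⟩) <;> omega⟩
  exact (lt_or_ge k n).imp id fun hk => ⟨k - n, by omega, by omega⟩

end seqAppend

section image

variable {β : Type*}

lemma image_sub_Iic (f : ℕ → β) {m n : ℕ} (h : m ≤ n) :
    (fun k => f (n - k)) '' Iic m = f '' Icc (n - m) n := by
  ext x
  constructor <;> rintro ⟨k, hk, rfl⟩ <;> simp only [mem_Iic, mem_Icc] at hk
  · exact ⟨n - k, by simp only [mem_Icc]; omega, rfl⟩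
  · exact ⟨n - k, by simp only [mem_Iic]; omega, by simp only [Nat.sub_sub_self hk.2]⟩

lemma image_sub_one_sub_Iio (f : ℕ → β) {m n : ℕ} (h : m ≤ n) :
    (fun k => f (n - 1 - k)) '' Iio m = f '' Ico (n - m) n := by
  ext x
  constructor <;> rintro ⟨k, hk, rfl⟩ <;> simp only [mem_Iio, mem_Ico] at hk
  · exact ⟨n - 1 - k, by simp only [mem_Ico]; omega, rfl⟩
  · refine ⟨n - 1 - k, by simp only [mem_Iio]; omega, ?_⟩
    simp only [show n - 1 - (n - 1 - k) = k by omega]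

end image

/-- The Berge path `v 0, e 0, v 1, …, e (ℓ-1), v ℓ`, encoded by sequences on `ℕ` whose values
outside `[0, ℓ]` (resp. `[0, ℓ)`) play no role. -/
structure IsBergePathSeq (H : Hypergraph' α) (v : ℕ → α) (e : ℕ → Finset α) (ℓ : ℕ) : Prop where
  injOn_v : InjOn v (Iic ℓ)
  injOn_e : InjOn e (Iio ℓ)
  e_mem : ∀ k < ℓ, e k ∈ H.edges
  mem_left : ∀ k < ℓ, v k ∈ e k
  mem_right : ∀ k < ℓ, v (k + 1) ∈ e k

namespace IsBergePathSeq

variable {H : Hypergraph' α} {v v₁ v₂ : ℕ → α} {e e₁ e₂ : ℕ → Finset α} {ℓ ℓ₁ ℓ₂ : ℕ}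

lemma mono (h : IsBergePathSeq H v e ℓ) {m : ℕ} (hm : m ≤ ℓ) : IsBergePathSeq H v e m where
  injOn_v := h.injOn_v.mono (Iic_subset_Iic.2 hm)
  injOn_e := h.injOn_e.mono (Iio_subset_Iio hm)
  e_mem k hk := h.e_mem k (by omega)
  mem_left k hk := h.mem_left k (by omega)
  mem_right k hk := h.mem_right k (by omega)

lemma reverse (h : IsBergePathSeq H v e ℓ) :
    IsBergePathSeq H (fun k => v (ℓ - k)) (fun k => e (ℓ - 1 - k)) ℓ where
  injOn_v i hi j hj hij := by
    have := h.injOn_v (mem_Iic.2 (Nat.sub_le ℓ i)) (mem_Iic.2 (Nat.sub_le ℓ j)) hij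
    simp only [mem_Iic] at hi hj; omega
  injOn_e i hi j hj hij := by
    simp only [mem_Iio] at hi hj
    have := h.injOn_e (mem_Iio.2 (by omega)) (mem_Iio.2 (by omega)) hij
    omega
  e_mem k hk := h.e_mem _ (by omega)
  mem_left k hk := by
    simpa [show ℓ - k = ℓ - 1 - k + 1 by omega] using h.mem_right (ℓ - 1 - k) (by omega)
  mem_right k hk := by
    simpa [show ℓ - (k + 1) = ℓ - 1 - k by omega] using h.mem_left (ℓ - 1 - k) (by omega)

lemma append (h₁ : IsBergePathSeq H v₁ e₁ ℓ₁) (h₂ : IsBergePathSeq H v₂ e₂ ℓ₂)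
    (hjoin : v₁ ℓ₁ = v₂ 0) (hv : Disjoint (v₁ '' Iio ℓ₁) (v₂ '' Iic ℓ₂))
    (he : Disjoint (e₁ '' Iio ℓ₁) (e₂ '' Iio ℓ₂)) :
    IsBergePathSeq H (seqAppend v₁ v₂ ℓ₁) (seqAppend e₁ e₂ ℓ₁) (ℓ₁ + ℓ₂) where
  injOn_v i hi j hj hij := by
    simp only [mem_Iic] at hi hj
    unfold seqAppend at hij
    split_ifs at hij with hi₁ hj₁ hj₁
    · exact h₁.injOn_v (mem_Iic.2 hi₁.le) (mem_Iic.2 hj₁.le) hij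
    · exact absurd hij (hv.ne_of_mem ⟨i, hi₁, rfl⟩ ⟨j - ℓ₁, mem_Iic.2 (by omega), rfl⟩)
    · exact absurd hij.symm (hv.ne_of_mem ⟨j, hj₁, rfl⟩ ⟨i - ℓ₁, mem_Iic.2 (by omega), rfl⟩)
    · have := h₂.injOn_v (mem_Iic.2 (by omega)) (mem_Iic.2 (by omega)) hij; omega
  injOn_e i hi j hj hij := by
    simp only [mem_Iio] at hi hj
    unfold seqAppend at hij
    split_ifs at hij with hi₁ hj₁ hj₁
    · exact h₁.injOn_e hi₁ hj₁ hij
    · exact absurd hij (he.ne_of_mem ⟨i, hi₁, rfl⟩ ⟨j - ℓ₁, mem_Iio.2 (by omega), rfl⟩)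
    · exact absurd hij.symm (he.ne_of_mem ⟨j, hj₁, rfl⟩ ⟨i - ℓ₁, mem_Iio.2 (by omega), rfl⟩)
    · have := h₂.injOn_e (mem_Iio.2 (by omega)) (mem_Iio.2 (by omega)) hij; omega
  e_mem k hk := by
    unfold seqAppend
    split_ifs with hk₁
    exacts [h₁.e_mem k hk₁, h₂.e_mem _ (by omega)]
  mem_left k hk := by
    unfold seqAppend
    split_ifs with hk₁
    exacts [h₁.mem_left k hk₁, h₂.mem_left _ (by omega)]
  mem_right k hk := by
    unfold seqAppend
    split_ifs with hk₁ hk₂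
    · exact h₁.mem_right k hk₁
    · obtain rfl : k + 1 = ℓ₁ := by omega
      rw [Nat.sub_self, ← hjoin]
      exact h₁.mem_right k hk₁
    · omega
    · rw [show k + 1 - ℓ₁ = k - ℓ₁ + 1 by omega]
      exact h₂.mem_right _ (by omega)

lemma edge {x y : α} {g : Finset α} (hxy : x ≠ y) (hg : g ∈ H.edges) (hx : x ∈ g) (hy : y ∈ g) :
    IsBergePathSeq H (fun k => if k = 0 then x else y) (fun _ => g) 1 where
  injOn_v i hi j hj hij := by
    simp only [mem_Iic] at hi hj
    dsimp only at hij
    split_ifs at hij <;> first | omega | exact absurd hij hxy | exact absurd hij.symm hxy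
  injOn_e i hi j hj _ := by simp only [mem_Iio] at hi hj; omega
  e_mem _ _ := hg
  mem_left k hk := by simpa [show k = 0 by omega] using hx
  mem_right _ _ := by simpa using hy

lemma hasBergeCycle_succ (h : IsBergePathSeq H v e ℓ) (hℓ : 1 ≤ ℓ) {g : Finset α}
    (hg : g ∈ H.edges) (hgP : g ∉ e '' Iio ℓ) (hlast : v ℓ ∈ g) (hfirst : v 0 ∈ g) :
    H.HasBergeCycle (ℓ + 1) := by
  have : Fact (1 < ℓ + 1) := ⟨by omega⟩
  have hval (i : ZMod (ℓ + 1)) : (i + 1).val = (i.val + 1) % (ℓ + 1) := by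
    rw [ZMod.val_add, ZMod.val_one]
  have hlt (i : ZMod (ℓ + 1)) : i.val < ℓ + 1 := ZMod.val_lt i
  refine ⟨by omega, fun i => v i.val, fun i => seqAppend e (fun _ => g) ℓ i.val,
    fun i j hij => ZMod.val_injective _ (h.injOn_v (by simpa using hlt i) (by simpa using hlt j)
      hij),
    fun i j hij => ZMod.val_injective _ ?_, fun i => ?_, fun i => ?_, fun i => ?_⟩
  · have hi := hlt i; have hj := hlt j
    simp only [seqAppend] at hij
    split_ifs at hij with hi' hj' hj'
    · exact h.injOn_e hi' hj' hij
    · exact absurd hij.symm fun hge => hgP ⟨_, hi', hge.symm⟩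
    · exact absurd hij fun hge => hgP ⟨_, hj', hge.symm⟩
    · omega
  · simp only [seqAppend]
    split_ifs with hi
    exacts [h.e_mem _ hi, hg]
  · simp only [seqAppend]
    split_ifs with hi
    · exact h.mem_left _ hi
    · rwa [show i.val = ℓ by have := hlt i; omega]
  · simp only [seqAppend, hval]
    split_ifs with hi
    · rw [Nat.mod_eq_of_lt (by omega)]
      exact h.mem_right _ hi
    · rwa [show i.val = ℓ by have := hlt i; omega, Nat.mod_self]

lemma hasBergeCycle_add_two (h : IsBergePathSeq H v e ℓ) {w : α} (hw : w ∉ v '' Iic ℓ)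
    {g₁ g₂ : Finset α} (hg₁ : g₁ ∈ H.edges) (hg₂ : g₂ ∈ H.edges) (hne : g₁ ≠ g₂)
    (hg₁P : g₁ ∉ e '' Iio ℓ) (hg₂P : g₂ ∉ e '' Iio ℓ)
    (hw₁ : w ∈ g₁) (h₁ : v 0 ∈ g₁) (hw₂ : w ∈ g₂) (h₂ : v ℓ ∈ g₂) :
    H.HasBergeCycle (ℓ + 2) := by
  have hw0 : w ≠ v 0 := fun hw0 => hw ⟨0, by simp, hw0.symm⟩
  have hP := (edge hw0 hg₁ hw₁ h₁).append h (by simp) (by simpa using hw) (by simpa using hg₁P)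
  rw [show ℓ + 2 = 1 + ℓ + 1 by omega]
  refine hP.hasBergeCycle_succ (by omega) hg₂ ?_ (by rwa [seqAppend_add]) (by simpa [seqAppend])
  rw [image_seqAppend_Iio]
  simpa [Ne.symm hne] using hg₂P

lemma isBergePathSeq_rotate {V : ℕ → α} {E : ℕ → Finset α} {n d : ℕ}
    (hP : IsBergePathSeq H V E n) (hd : d < n) (hR : IsBergePathSeq H v e ℓ) (hR0 : v 0 = V d)
    (hRℓ : v ℓ = V n) (hRint : ∀ k, 0 < k → k < ℓ → v k ∉ V '' Iic n)
    (hRe : ∀ k < ℓ, e k ∉ E '' Iio n) :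
    IsBergePathSeq H (seqAppend (seqAppend V v d) (fun k => V (n - k)) (d + ℓ))
      (seqAppend (seqAppend E e d) (fun k => E (n - 1 - k)) (d + ℓ)) (d + ℓ + (n - (d + 1))) := by
  have hRV : ∀ k ≤ ℓ, ∀ j ≤ n, v k = V j → k = 0 ∧ j = d ∨ k = ℓ ∧ j = n := by
    intro k hk j hj h
    rcases Nat.eq_zero_or_pos k with rfl | hk0
    · exact .inl ⟨rfl, hP.injOn_v hj (mem_Iic.2 hd.le) (h.symm.trans hR0)⟩
    rcases eq_or_lt_of_le hk with rfl | hkℓ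
    · exact .inr ⟨rfl, hP.injOn_v hj self_mem_Iic (h.symm.trans hRℓ)⟩
    · exact absurd ⟨j, hj, h.symm⟩ (hRint k hk0 hkℓ)
  have hRE (S : Set ℕ) (hS : S ⊆ Iio n) : Disjoint (e '' Iio ℓ) (E '' S) :=
    disjoint_image_image fun k hk j hj h => hRe k hk ⟨j, hS hj, h.symm⟩
  have hsub : n - (n - (d + 1)) = d + 1 := by omega
  have hA := (hP.mono hd.le).append hR hR0.symm
    (disjoint_image_image fun j hj k hk h => by
      rw [mem_Iio] at hj
      have := hRV k hk j (by omega) h.symm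
      omega)
    (hRE _ (Iio_subset_Iio hd.le)).symm
  refine hA.append (hP.reverse.mono (by omega)) (by rw [seqAppend_add, hRℓ, Nat.sub_zero]) ?_ ?_
  · rw [image_seqAppend_Iio, image_sub_Iic _ (by omega), hsub]
    refine disjoint_union_left.2 ⟨Disjoint.image ?_ hP.injOn_v ?_ ?_, ?_⟩
    · exact disjoint_left.2 fun k hk hk' => by simp only [mem_Iio, mem_Icc] at hk hk'; omega
    · exact fun k hk => by simp only [mem_Iio, mem_Iic] at hk ⊢; omega
    · exact fun k hk => by simp only [mem_Icc, mem_Iic] at hk ⊢; omega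
    · refine disjoint_image_image fun k hk j hj h => ?_
      simp only [mem_Iio, mem_Icc] at hk hj
      have := hRV k hk.le j hj.2 h
      omega
  · rw [image_seqAppend_Iio, image_sub_one_sub_Iio _ (by omega), hsub]
    refine disjoint_union_left.2 ⟨Disjoint.image ?_ hP.injOn_e ?_ ?_, hRE _ fun k hk => ?_⟩
    · exact disjoint_left.2 fun k hk hk' => by simp only [mem_Iio, mem_Ico] at hk hk'; omega
    · exact fun k hk => by simp only [mem_Iio] at hk ⊢; omega
    · exact fun k hk => by simp only [mem_Ico, mem_Iio] at hk ⊢; omega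
    · simp only [mem_Ico, mem_Iio] at hk ⊢; omega

/-- Pósa rotation: `V 0, …, V d`, then the outside path to `V n`, then `V (n-1), …, V (d+1)`. -/
lemma exists_rotate {V : ℕ → α} {E : ℕ → Finset α} {n d : ℕ} (hP : IsBergePathSeq H V E n)
    (hd : d < n) (hR : IsBergePathSeq H v e ℓ) (hR0 : v 0 = V d) (hRℓ : v ℓ = V n)
    (hRint : ∀ k, 0 < k → k < ℓ → v k ∉ V '' Iic n) (hRe : ∀ k < ℓ, e k ∉ E '' Iio n) :
    ∃ (v' : ℕ → α) (e' : ℕ → Finset α), IsBergePathSeq H v' e' (n + ℓ - 1) ∧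
      v' 0 = V 0 ∧ v' (n + ℓ - 1) = V (d + 1) ∧
      v' '' Iic (n + ℓ - 1) ⊆ V '' Iic n ∪ v '' Iic ℓ ∧
      e' '' Iio (n + ℓ - 1) ⊆ E '' (Iio n \ {d}) ∪ e '' Iio ℓ := by
  have hℓ : 0 < ℓ := Nat.pos_of_ne_zero fun h0 => by
    subst h0
    have := hP.injOn_v (mem_Iic.2 hd.le) self_mem_Iic (hR0.symm.trans hRℓ)
    omega
  have hlen : d + ℓ + (n - (d + 1)) = n + ℓ - 1 := by omega
  have hsub : n - (n - (d + 1)) = d + 1 := by omega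
  refine ⟨_, _, hlen ▸ isBergePathSeq_rotate hP hd hR hR0 hRℓ hRint hRe, ?_, ?_, ?_, ?_⟩
  · rw [seqAppend_of_lt (show 0 < d + ℓ by omega)]
    rcases Nat.eq_zero_or_pos d with rfl | hd0
    · rw [seqAppend_of_le le_rfl, Nat.sub_self, hR0]
    · exact seqAppend_of_lt hd0
  · rw [← hlen, seqAppend_add, hsub]
  · rw [← hlen, image_seqAppend_Iic, image_seqAppend_Iio, image_sub_Iic _ (by omega)]
    refine union_subset (union_subset ?_ ?_) ?_
    · exact (image_mono (Iio_subset_Iic_self.trans (Iic_subset_Iic.2 hd.le))).trans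
        subset_union_left
    · exact (image_mono Iio_subset_Iic_self).trans subset_union_right
    · exact (image_mono Icc_subset_Iic_self).trans subset_union_left
  · rw [← hlen, image_seqAppend_Iio, image_seqAppend_Iio, image_sub_one_sub_Iio _ (by omega), hsub]
    refine union_subset (union_subset ?_ subset_union_right) ?_ <;>
      refine (image_mono fun k hk => ?_).trans subset_union_left <;>
      simp only [mem_Iio, mem_Ico, mem_sdiff, mem_singleton_iff] at hk ⊢ <;> omega

end IsBergePathSeq

lemma ZMod.injOn_const_add_natCast {c : ℕ} (s : ZMod c) :
    InjOn (fun k : ℕ => s + (k : ZMod c)) (Iio c) := by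
  intro i hi j hj hij
  have := (ZMod.natCast_eq_natCast_iff' i j c).1 (add_left_cancel hij)
  rwa [Nat.mod_eq_of_lt hi, Nat.mod_eq_of_lt hj] at this

namespace BergeCycle

variable {H : Hypergraph' α} {c : ℕ}

lemma neZero (C : BergeCycle H c) : NeZero c := ⟨by have := C.hc; omega⟩

variable (C : BergeCycle H c)

lemma mem_vset {x : α} : x ∈ C.vset ↔ ∃ i, C.v i = x := by
  have := C.neZero; simp [vset]

lemma mem_eset {f : Finset α} : f ∈ C.eset ↔ ∃ i, C.e i = f := by
  have := C.neZero; simp [eset]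

lemma v_mem_vset (i : ZMod c) : C.v i ∈ C.vset := C.mem_vset.2 ⟨i, rfl⟩

lemma e_mem_eset (i : ZMod c) : C.e i ∈ C.eset := C.mem_eset.2 ⟨i, rfl⟩

def vFrom (s : ZMod c) (k : ℕ) : α := C.v (s + k)

def eFrom (s : ZMod c) (k : ℕ) : Finset α := C.e (s + k)

lemma isBergePathSeq_vFrom (s : ZMod c) :
    IsBergePathSeq H (C.vFrom s) (C.eFrom s) (c - 1) where
  injOn_v x hx y hy hxy := C.v_inj.comp_injOn (ZMod.injOn_const_add_natCast s)
    (Iic_subset_Iio.2 (by have := C.hc; omega) hx) (Iic_subset_Iio.2 (by have := C.hc; omega) hy)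
    hxy
  injOn_e x hx y hy hxy := C.e_inj.comp_injOn (ZMod.injOn_const_add_natCast s)
    (Iio_subset_Iio (Nat.sub_le c 1) hx) (Iio_subset_Iio (Nat.sub_le c 1) hy) hxy
  e_mem _ _ := C.e_mem _
  mem_left _ _ := C.mem_self _
  mem_right k _ := by simpa only [vFrom, eFrom, Nat.cast_succ, add_assoc] using C.mem_succ (s + k)

lemma image_vFrom_subset (s : ZMod c) (S : Set ℕ) : C.vFrom s '' S ⊆ C.vset := by
  rintro _ ⟨k, -, rfl⟩; exact C.v_mem_vset _

lemma image_eFrom_subset (s : ZMod c) (S : Set ℕ) : C.eFrom s '' S ⊆ C.eset := by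
  rintro _ ⟨k, -, rfl⟩; exact C.e_mem_eset _

lemma notMem_image_eFrom {s : ZMod c} {d : ℕ} (hd : d < c) {g : Finset α}
    (hg : ∀ k, C.e k = g → k = s + d ∨ k = s + ((c - 1 : ℕ) : ZMod c)) :
    g ∉ C.eFrom s '' (Iio (c - 1) \ {d}) := by
  rintro ⟨k, ⟨hk, hkd⟩, hkg⟩
  simp only [mem_Iio, mem_singleton_iff] at hk hkd
  rcases hg _ hkg with h | h
  · exact hkd (ZMod.injOn_const_add_natCast s (mem_Iio.2 (by omega)) (mem_Iio.2 hd) h)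
  · have := ZMod.injOn_const_add_natCast s (mem_Iio.2 (by omega)) (mem_Iio.2 (by omega)) h
    omega

end BergeCycle

namespace BergePath

variable {H : Hypergraph' α} {ℓ : ℕ} (R : BergePath H ℓ)

def vseq (k : ℕ) : α := R.u ⟨min k ℓ, by omega⟩

def eseq (k : ℕ) : Finset α := if h : k < ℓ then R.f ⟨k, h⟩ else ∅

lemma vseq_of_le {k : ℕ} (h : k ≤ ℓ) : R.vseq k = R.u ⟨k, by omega⟩ := by
  simp only [vseq, min_eq_left h]

lemma eseq_of_lt {k : ℕ} (h : k < ℓ) : R.eseq k = R.f ⟨k, h⟩ := dif_pos h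

lemma isBergePathSeq : IsBergePathSeq H R.vseq R.eseq ℓ where
  injOn_v i hi j hj hij := by
    simp only [mem_Iic] at hi hj
    rw [R.vseq_of_le hi, R.vseq_of_le hj] at hij
    exact Fin.mk.inj_iff.1 (R.u_inj hij)
  injOn_e i hi j hj hij := by
    simp only [mem_Iio] at hi hj
    rw [R.eseq_of_lt hi, R.eseq_of_lt hj] at hij
    exact Fin.mk.inj_iff.1 (R.f_inj hij)
  e_mem k hk := by rw [R.eseq_of_lt hk]; exact R.f_mem _
  mem_left k hk := by rw [R.eseq_of_lt hk, R.vseq_of_le hk.le]; exact R.mem_cast ⟨k, hk⟩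
  mem_right k hk := by rw [R.eseq_of_lt hk, R.vseq_of_le hk]; exact R.mem_succ ⟨k, hk⟩

lemma image_eseq : R.eseq '' Iio ℓ = R.eset := by
  ext f
  simp only [mem_image, mem_Iio, eset, Finset.coe_image, Finset.coe_univ, image_univ, mem_range]
  constructor
  · rintro ⟨k, hk, rfl⟩; exact ⟨⟨k, hk⟩, (R.eseq_of_lt hk).symm⟩
  · rintro ⟨t, rfl⟩; exact ⟨t, t.isLt, R.eseq_of_lt t.isLt⟩

lemma vseq_of_interior {p : α → Prop}
    (hint : ∀ t : Fin (ℓ + 1), t ≠ 0 → t ≠ Fin.last ℓ → p (R.u t)) {k : ℕ} (hk0 : 0 < k)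
    (hkℓ : k < ℓ) : p (R.vseq k) := by
  rw [R.vseq_of_le hkℓ.le]
  exact hint _ (fun h => by simp [Fin.ext_iff] at h; omega)
    (fun h => by simp [Fin.ext_iff] at h; omega)

lemma notMem_eset {S : Finset (Finset α)} (hRS : ∀ t, R.f t ∉ S) {f : Finset α} (hf : f ∈ S) :
    f ∉ R.eset := by
  simp only [eset, Finset.mem_image, Finset.mem_univ, true_and, not_exists]
  exact fun t ht => hRS t (ht ▸ hf)

lemma length_pos (h : R.u 0 ≠ R.u (Fin.last ℓ)) : 0 < ℓ :=
  Nat.pos_of_ne_zero fun hℓ => h (by subst hℓ; rfl)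

end BergePath

namespace BergeCycle

variable {H : Hypergraph' α} {c : ℕ} (C : BergeCycle H c)

theorem hasBergeCycle_of_bypass {u : α} (huC : u ∉ C.vset) {a b : ZMod c} (hab : a ≠ b)
    {ℓ : ℕ} (R : BergePath H ℓ) (hR0 : R.u 0 = C.v a) (hRℓ : R.u (Fin.last ℓ) = C.v b)
    (hint : ∀ t : Fin (ℓ + 1), t ≠ 0 → t ≠ Fin.last ℓ → R.u t ∉ C.vset ∧ R.u t ≠ u)
    (hRe : ∀ t : Fin ℓ, R.f t ∉ C.eset) {g₁ g₂ : Finset α} (hg₁ : g₁ ∈ H.edges)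
    (hg₂ : g₂ ∈ H.edges) (hne : g₁ ≠ g₂) (hg₁C : ∀ k, C.e k = g₁ → k = a ∨ k = b)
    (hg₂C : ∀ k, C.e k = g₂ → k = a ∨ k = b) (hg₁R : g₁ ∉ R.eset) (hg₂R : g₂ ∉ R.eset)
    (hu₁ : u ∈ g₁) (hv₁ : C.v (a + 1) ∈ g₁) (hu₂ : u ∈ g₂) (hv₂ : C.v (b + 1) ∈ g₂) :
    H.HasBergeCycle (c + ℓ) := by
  have := C.neZero
  have hc := C.hc
  set s := b + 1
  set d := (a - s).val
  have hsd : s + (d : ZMod c) = a := by rw [ZMod.natCast_zmod_val]; ring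
  have hsc : s + ((c - 1 : ℕ) : ZMod c) = b := by
    rw [Nat.cast_sub (by omega), ZMod.natCast_self]; ring
  have hd : d < c - 1 := by
    have : d ≠ c - 1 := fun h => hab (by rw [← hsd, ← hsc, h])
    have := ZMod.val_lt (a - s); omega
  have hR0' : R.vseq 0 = C.v a := by rw [R.vseq_of_le (Nat.zero_le _)]; exact hR0
  have hRℓ' : R.vseq ℓ = C.v b := by rw [R.vseq_of_le le_rfl]; exact hRℓ
  have hRint {k : ℕ} (hk0 : 0 < k) (hkℓ : k < ℓ) : R.vseq k ∉ C.vset ∧ R.vseq k ≠ u :=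
    R.vseq_of_interior (p := fun x => x ∉ C.vset ∧ x ≠ u) hint hk0 hkℓ
  obtain ⟨v, e, hP, hP0, hPlast, hPv, hPe⟩ := (C.isBergePathSeq_vFrom s).exists_rotate hd
    R.isBergePathSeq (by rw [hR0', vFrom, hsd]) (by rw [hRℓ', vFrom, hsc])
    (fun k hk0 hkℓ h => (hRint hk0 hkℓ).1 (C.image_vFrom_subset s _ h))
    (fun k hk h => hRe _ (R.eseq_of_lt hk ▸ C.image_eFrom_subset s _ h))
  have hgC {g : Finset α} (hgC : ∀ k, C.e k = g → k = a ∨ k = b) :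
      g ∉ C.eFrom s '' (Iio (c - 1) \ {d}) :=
    C.notMem_image_eFrom (by omega) fun k hk => by rw [hsd, hsc]; exact hgC k hk
  have huR : u ∉ R.vseq '' Iic ℓ := by
    rintro ⟨k, hk, hku⟩
    simp only [mem_Iic] at hk
    rcases Nat.eq_zero_or_pos k with rfl | hk0
    · exact huC (hku ▸ hR0' ▸ C.v_mem_vset a)
    rcases eq_or_lt_of_le hk with rfl | hkℓ
    · exact huC (hku ▸ hRℓ' ▸ C.v_mem_vset b)
    · exact (hRint hk0 hkℓ).2 hku
  have := hP.hasBergeCycle_add_two (w := u)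
    (fun h => (hPv h).elim (huC <| C.image_vFrom_subset s _ ·) huR) hg₂ hg₁ hne.symm
    (fun h => (hPe h).elim (hgC hg₂C) (by rwa [R.image_eseq]))
    (fun h => (hPe h).elim (hgC hg₁C) (by rwa [R.image_eseq]))
    hu₂ (by rwa [hP0, vFrom, Nat.cast_zero, add_zero]) hu₁
    (by rwa [hPlast, vFrom, Nat.cast_succ, ← add_assoc, hsd])
  rwa [show c - 1 + ℓ - 1 + 2 = c + ℓ by omega] at this

def reverse : BergeCycle H c where
  hc := C.hc
  v i := C.v (-i)
  e i := C.e (-i - 1)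
  v_inj := C.v_inj.comp neg_injective
  e_inj := C.e_inj.comp (sub_left_injective.comp neg_injective)
  e_mem _ := C.e_mem _
  mem_self i := by simpa using C.mem_succ (-i - 1)
  mem_succ i := by simpa only [neg_add'] using C.mem_self (-i - 1)

@[simp] lemma reverse_v (i : ZMod c) : C.reverse.v i = C.v (-i) := rfl

@[simp] lemma reverse_e (i : ZMod c) : C.reverse.e i = C.e (-i - 1) := rfl

@[simp] lemma reverse_vset : C.reverse.vset = C.vset := by
  ext x
  rw [C.reverse.mem_vset, C.mem_vset]
  exact ⟨fun ⟨i, h⟩ => ⟨-i, h⟩, fun ⟨i, h⟩ => ⟨-i, by simpa using h⟩⟩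

@[simp] lemma reverse_eset : C.reverse.eset = C.eset := by
  ext f
  rw [C.reverse.mem_eset, C.mem_eset]
  exact ⟨fun ⟨i, h⟩ => ⟨-i - 1, h⟩, fun ⟨i, h⟩ => ⟨-i - 1, by simpa using h⟩⟩

lemma isExpanding_reverse {u : α} {W : Finset α} :
    IsExpanding C.reverse u W ↔ IsExpanding C u W := by
  simp only [IsExpanding, reverse_vset, reverse_eset]

theorem eq_of_mem_e_of_isExpanding (hmax : ∀ m, H.HasBergeCycle m → m ≤ c) {u : α}
    (huC : u ∉ C.vset) {W : Finset α} (hW : IsExpanding C u W) {i j : ZMod c}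
    (hi : C.v i ∈ W) (hj : C.v j ∈ W) (hui : u ∈ C.e i) (huj : u ∈ C.e j) : i = j := by
  by_contra hij
  obtain ⟨ℓ, R, hR0, hRℓ, hint, hRe⟩ := hW.2 _ hi _ hj (C.v_inj.ne hij)
  have hlong := hmax _ <| C.hasBergeCycle_of_bypass huC hij R hR0 hRℓ hint hRe (C.e_mem i)
    (C.e_mem j) (C.e_inj.ne hij) (fun k hk => .inl (C.e_inj hk)) (fun k hk => .inr (C.e_inj hk))
    (R.notMem_eset hRe (C.e_mem_eset i)) (R.notMem_eset hRe (C.e_mem_eset j)) hui (C.mem_succ i) huj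
    (C.mem_succ j)
  have := R.length_pos (by rw [hR0, hRℓ]; exact C.v_inj.ne hij)
  omega

theorem v_succ_notMem_of_bypass (hmax : ∀ m, H.HasBergeCycle m → m ≤ c) {u : α}
    (huC : u ∉ C.vset) {i j : ZMod c} (huj : u ∈ C.e j) (hij : C.v i ≠ C.v j) {ℓ : ℕ}
    (R : BergePath H ℓ) (hR0 : R.u 0 = C.v i) (hRℓ : R.u (Fin.last ℓ) = C.v j)
    (hint : ∀ t : Fin (ℓ + 1), t ≠ 0 → t ≠ Fin.last ℓ → R.u t ∉ C.vset ∧ R.u t ≠ u)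
    (hRe : ∀ t : Fin ℓ, R.f t ∉ C.eset) {e : Finset α} (he : e ∈ H.edges) (heC : e ∉ C.eset)
    (heR : e ∉ R.eset) (hue : u ∈ e) : C.v (i + 1) ∉ e := fun hve => by
  have hlong := hmax _ <| C.hasBergeCycle_of_bypass huC (fun h => hij (congrArg C.v h)) R hR0 hRℓ
    hint hRe he (C.e_mem j) (fun h => heC (h ▸ C.e_mem_eset j))
    (fun k hk => absurd (hk ▸ C.e_mem_eset k) heC) (fun k hk => .inr (C.e_inj hk))
    heR (R.notMem_eset hRe (C.e_mem_eset j)) hue hve huj (C.mem_succ j)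
  have := R.length_pos (by rw [hR0, hRℓ]; exact hij)
  omega

end BergeCycle

theorem statement18_general {α : Type*} [DecidableEq α] (c : ℕ)
    (H : Hypergraph' α)
    (C : BergeCycle H c) (hmax : ∀ m, H.HasBergeCycle m → m ≤ c)
    (u : α) (huC : u ∉ C.vset)
    (W : Finset α) (hW : IsExpanding C u W) :
    (∀ i j : ZMod c, C.v i ∈ W → C.v j ∈ W → u ∈ C.e i → u ∈ C.e j → i = j) ∧
    (∀ i j : ZMod c, C.v i ∈ W → C.v j ∈ W → u ∈ C.e (i - 1) → u ∈ C.e (j - 1) → i = j) ∧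
    (∀ j : ZMod c, C.v j ∈ W → u ∈ C.e j →
      ∀ i : ZMod c, C.v i ∈ W → C.v i ≠ C.v j →
      ∀ (ℓ : ℕ) (R : BergePath H ℓ),
        R.u 0 = C.v i → R.u (Fin.last ℓ) = C.v j →
        (∀ t : Fin (ℓ + 1), t ≠ 0 → t ≠ Fin.last ℓ → R.u t ∉ C.vset ∧ R.u t ≠ u) →
        (∀ t : Fin ℓ, R.f t ∉ C.eset) →
        ∀ e ∈ H.edges, e ∉ C.eset → e ∉ R.eset → u ∈ e → C.v (i + 1) ∉ e) ∧
    (∀ j : ZMod c, C.v j ∈ W → u ∈ C.e (j - 1) →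
      ∀ i : ZMod c, C.v i ∈ W → C.v i ≠ C.v j →
      ∀ (ℓ : ℕ) (R : BergePath H ℓ),
        R.u 0 = C.v i → R.u (Fin.last ℓ) = C.v j →
        (∀ t : Fin (ℓ + 1), t ≠ 0 → t ≠ Fin.last ℓ → R.u t ∉ C.vset ∧ R.u t ≠ u) →
        (∀ t : Fin ℓ, R.f t ∉ C.eset) →
        ∀ e ∈ H.edges, e ∉ C.eset → e ∉ R.eset → u ∈ e → C.v (i - 1) ∉ e) := by
  have huC' : u ∉ C.reverse.vset := by rwa [C.reverse_vset]
  refine ⟨fun i j hi hj => C.eq_of_mem_e_of_isExpanding hmax huC hW hi hj, ?_,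
    fun j _ huj i _ hij ℓ R hR0 hRℓ hint hRe e he heC heR hue =>
      C.v_succ_notMem_of_bypass hmax huC huj hij R hR0 hRℓ hint hRe he heC heR hue, ?_⟩
  · intro i j hi hj hui huj
    refine neg_injective (C.reverse.eq_of_mem_e_of_isExpanding hmax huC'
      (C.isExpanding_reverse.2 hW) (i := -i) (j := -j) ?_ ?_ ?_ ?_) <;> simpa
  · intro j _ huj i _ hij ℓ R hR0 hRℓ hint hRe e he heC heR hue
    have := C.reverse.v_succ_notMem_of_bypass hmax huC' (i := -i) (j := -j) (by simpa) (by simpa)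
      R (by simpa) (by simpa) (by simpa) (by simpa) he (by simpa) heR hue
    rwa [BergeCycle.reverse_v, neg_add, neg_neg, ← sub_eq_add_neg] at this

/-- Claim `no2`. Let `C = v_1, e_1, …, v_c, e_c, v_1` be a longest
Berge cycle in an `r`-uniform hypergraph `H`, `u ∈ V(H) − V(C)`, and `W` a
`(u,C)`-expanding set. Then `u` lies in at most one edge of `{e_j : v_j ∈ W}` and in at
most one edge of `{e_{j−1} : v_j ∈ W}`. Moreover, if `v_j ∈ W` and `u ∈ e_j`, then for
every `v_i ∈ W − {v_j}` and every Berge path `R(v_i, v_j)` witnessing the expanding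
property, any edge `e ∈ E(H) − E(C) − E(R)` containing `u` avoids `v_{i+1}`; similarly,
if `u ∈ e_{j−1}` then such an `e` avoids `v_{i−1}`. -/
theorem statement18 {α : Type*} [DecidableEq α] (r c : ℕ)
    (H : Hypergraph' α) (hunif : H.Uniform r)
    (C : BergeCycle H c) (hmax : ∀ m, H.HasBergeCycle m → m ≤ c)
    (u : α) (huV : u ∈ H.verts) (huC : u ∉ C.vset)
    (W : Finset α) (hW : IsExpanding C u W) :
    (∀ i j : ZMod c, C.v i ∈ W → C.v j ∈ W → u ∈ C.e i → u ∈ C.e j → i = j) ∧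
    (∀ i j : ZMod c, C.v i ∈ W → C.v j ∈ W → u ∈ C.e (i - 1) → u ∈ C.e (j - 1) → i = j) ∧
    (∀ j : ZMod c, C.v j ∈ W → u ∈ C.e j →
      ∀ i : ZMod c, C.v i ∈ W → C.v i ≠ C.v j →
      ∀ (ℓ : ℕ) (R : BergePath H ℓ),
        R.u 0 = C.v i → R.u (Fin.last ℓ) = C.v j →
        (∀ t : Fin (ℓ + 1), t ≠ 0 → t ≠ Fin.last ℓ → R.u t ∉ C.vset ∧ R.u t ≠ u) →
        (∀ t : Fin ℓ, R.f t ∉ C.eset) →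
        ∀ e ∈ H.edges, e ∉ C.eset → e ∉ R.eset → u ∈ e → C.v (i + 1) ∉ e) ∧
    (∀ j : ZMod c, C.v j ∈ W → u ∈ C.e (j - 1) →
      ∀ i : ZMod c, C.v i ∈ W → C.v i ≠ C.v j →
      ∀ (ℓ : ℕ) (R : BergePath H ℓ),
        R.u 0 = C.v i → R.u (Fin.last ℓ) = C.v j →
        (∀ t : Fin (ℓ + 1), t ≠ 0 → t ≠ Fin.last ℓ → R.u t ∉ C.vset ∧ R.u t ≠ u) →
        (∀ t : Fin ℓ, R.f t ∉ C.eset) →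
        ∀ e ∈ H.edges, e ∉ C.eset → e ∉ R.eset → u ∈ e → C.v (i - 1) ∉ e) :=
  statement18_general c H C hmax u huC W hW
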